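/- arXiv:2212.05571 — 4 statements merged into one kernel-verified Lean document; each statement's English description precedes it below -/
import Mathlib

section
/- Let s ∈ ℝ and β > 0. The system b(s−ab) − βa = 0, a(s−ab) − βb = 0 admits a solution (a,b) ∈ ℝ² with a ≠ 0 if and only if |s| > β; moreover every such nontrivial solution satisfies a = sgn(s)·b and ab = sgn(s)·(|s| − β), where sgn(s) denotes the sign of s. -/
lemma fp_key (s β a b : ℝ) (hβ : 0 < β) (ha : a ≠ 0)
    (h1 : b * (s - a * b) - β * a = 0) (h2 : a * (s - a * b) - β * b = 0) :
    (a = b ∧ s - a * b = β) ∨ (a = -b ∧ s - a * b = -β) := by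
  have e1 : (b - a) * (s - a * b + β) = 0 := by linear_combination h1 - h2
  have e2 : (a + b) * (s - a * b - β) = 0 := by linear_combination h1 + h2
  rcases mul_eq_zero.1 e1 with h | h
  · rcases mul_eq_zero.1 e2 with h' | h'
    · exfalso; apply ha; linarith
    · left; constructor <;> linarith
  · rcases mul_eq_zero.1 e2 with h' | h'
    · right; constructor <;> linarith
    · exfalso; linarith

/-- The fixed-point system `b(s−ab) − βa = 0`, `a(s−ab) − βb = 0` with `β > 0` has a
solution with `a ≠ 0` iff `|s| > β`; every such nontrivial solution satisfies
`a = sgn(s)·b` and `ab = sgn(s)·(|s| − β)`. -/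
theorem nontrivial_fixed_points_iff (s β : ℝ) (hβ : 0 < β) :
    ((∃ a b : ℝ, a ≠ 0 ∧ b * (s - a * b) - β * a = 0 ∧ a * (s - a * b) - β * b = 0) ↔
        |s| > β) ∧
      (∀ a b : ℝ, a ≠ 0 → b * (s - a * b) - β * a = 0 → a * (s - a * b) - β * b = 0 →
        a = Real.sign s * b ∧ a * b = Real.sign s * (|s| - β)) := by
  constructor
  · constructor
    · rintro ⟨a, b, ha, h1, h2⟩
      have ha2 : 0 < a * a := mul_self_pos.mpr ha
      rcases fp_key s β a b hβ ha h1 h2 with ⟨hab, he⟩ | ⟨hab, he⟩ <;> subst hab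
      · have hs : β < s := by nlinarith
        calc β < s := hs
        _ ≤ |s| := le_abs_self s
      · have hs : s < -β := by nlinarith
        calc β < -s := by linarith
        _ ≤ |s| := neg_abs_le s |> neg_le.mp |> fun h => (neg_le.1 (neg_abs_le s))
    · intro hs
      rcases le_or_gt 0 s with h0 | h0
      · have hs' : β < s := by rwa [abs_of_nonneg h0] at hs
        refine ⟨Real.sqrt (s - β), Real.sqrt (s - β), ?_, ?_, ?_⟩
        · exact ne_of_gt (Real.sqrt_pos.2 (by linarith))
        all_goals
          have hsq : Real.sqrt (s - β) * Real.sqrt (s - β) = s - β :=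
            Real.mul_self_sqrt (by linarith)
          rw [hsq]; ring
      · have hs' : β < -s := by rwa [abs_of_neg h0] at hs
        refine ⟨Real.sqrt (-s - β), -Real.sqrt (-s - β), ?_, ?_, ?_⟩
        · exact ne_of_gt (Real.sqrt_pos.2 (by linarith))
        all_goals
          have hsq : Real.sqrt (-s - β) * Real.sqrt (-s - β) = -s - β :=
            Real.mul_self_sqrt (by linarith)
          rw [mul_neg, hsq]; ring
  · intro a b ha h1 h2
    have ha2 : 0 < a * a := mul_self_pos.mpr ha
    rcases fp_key s β a b hβ ha h1 h2 with ⟨hab, he⟩ | ⟨hab, he⟩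
    · have hspos : 0 < s := by nlinarith [hab ▸ ha2]
      rw [Real.sign_of_pos hspos, abs_of_pos hspos]
      subst hab
      constructor
      · ring
      · nlinarith
    · have hsneg : s < 0 := by subst hab; nlinarith
      rw [Real.sign_of_neg hsneg, abs_of_neg hsneg]
      constructor
      · rw [hab]; ring
      · nlinarith
end

section
/- Let s, β ∈ ℝ with s > β > 0, and let (a,b) satisfy a = b and a² = s − β (a nontrivial symmetric fixed point). Then the Jacobian of the planar vector field F(a,b) = (b(s−ab) − βa, a(s−ab) − βb) at (a,b) equals [[−s, −s+2β], [−s+2β, −s]], and this matrix has eigenvalues −2β (eigenvector (1,−1)) and −2(s−β) (eigenvector (1,1)), both strictly negative; hence the fixed point is linearly stable. -/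
/-- At a nontrivial symmetric fixed point (`a = b`, `a² = s − β`, `s > β > 0`) the
Jacobian of `F(a,b) = (b(s−ab) − βa, a(s−ab) − βb)` equals
`[[−s, −s+2β], [−s+2β, −s]]`, with eigenvalues `−2β` (eigenvector `(1,−1)`) and
`−2(s−β)` (eigenvector `(1,1)`), both strictly negative. -/
theorem symmetric_fixed_point_stable (s β a b : ℝ) (hβ : 0 < β) (hs : β < s)
    (hab : a = b) (ha : a ^ 2 = s - β) :
    (∀ v : ℝ × ℝ,
        fderiv ℝ (fun p : ℝ × ℝ =>
          (p.2 * (s - p.1 * p.2) - β * p.1, p.1 * (s - p.1 * p.2) - β * p.2)) (a, b) v =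
          (((!![-s, -s + 2 * β; -s + 2 * β, -s] : Matrix (Fin 2) (Fin 2) ℝ).mulVec
              ![v.1, v.2]) 0,
            ((!![-s, -s + 2 * β; -s + 2 * β, -s] : Matrix (Fin 2) (Fin 2) ℝ).mulVec
              ![v.1, v.2]) 1)) ∧
      (!![-s, -s + 2 * β; -s + 2 * β, -s] : Matrix (Fin 2) (Fin 2) ℝ).mulVec ![1, -1] =
        (-2 * β) • ![1, -1] ∧
      (!![-s, -s + 2 * β; -s + 2 * β, -s] : Matrix (Fin 2) (Fin 2) ℝ).mulVec ![1, 1] =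
        (-2 * (s - β)) • ![1, 1] ∧
      -2 * β < 0 ∧ -2 * (s - β) < 0 := by
  refine ⟨?_, ?_, ?_, by linarith, by linarith⟩
  · intro v
    have h1 := (hasFDerivAt_snd.mul ((hasFDerivAt_const s ((a, b) : ℝ × ℝ)).sub
        ((hasFDerivAt_fst (𝕜 := ℝ)).mul hasFDerivAt_snd))).sub
        ((hasFDerivAt_fst (𝕜 := ℝ) (p := ((a, b) : ℝ × ℝ))).const_mul β)
    have h2 := ((hasFDerivAt_fst (𝕜 := ℝ) (p := ((a, b) : ℝ × ℝ))).mul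
        ((hasFDerivAt_const s ((a, b) : ℝ × ℝ)).sub
        ((hasFDerivAt_fst (𝕜 := ℝ)).mul hasFDerivAt_snd))).sub
        ((hasFDerivAt_snd (𝕜 := ℝ) (p := ((a, b) : ℝ × ℝ))).const_mul β)
    rw [HasFDerivAt.fderiv (f := fun p : ℝ × ℝ =>
        (p.2 * (s - p.1 * p.2) - β * p.1, p.1 * (s - p.1 * p.2) - β * p.2))
        (HasFDerivAt.prodMk h1 h2)]
    have hab2 : a * b = s - β := by rw [← hab]; nlinarith [ha]
    simp [Matrix.mulVec, dotProduct, Fin.sum_univ_two, hab2]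
    subst hab
    constructor <;> linear_combination (-v.1 - v.2) * hab2
  · funext i
    fin_cases i <;>
      simp [Matrix.mulVec, dotProduct, Fin.sum_univ_two] <;> ring
  · funext i
    fin_cases i <;>
      simp [Matrix.mulVec, dotProduct, Fin.sum_univ_two] <;> ring
end

section
/- Let s, β ∈ ℝ with s < −β < 0, and let (a,b) satisfy a = −b and a² = −s − β (a nontrivial antisymmetric fixed point). Then the Jacobian of the planar vector field F(a,b) = (b(s−ab) − βa, a(s−ab) − βb) at (a,b) equals [[s, −s−2β], [−s−2β, s]], and this matrix has eigenvalues −2β and 2(s+β), both strictly negative; hence the fixed point is linearly stable. -/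
/-- At a nontrivial antisymmetric fixed point (`a = −b`, `a² = −s − β`, `s < −β < 0`)
the Jacobian of `F(a,b) = (b(s−ab) − βa, a(s−ab) − βb)` equals
`[[s, −s−2β], [−s−2β, s]]`, with eigenvalues `−2β` and `2(s+β)`, both strictly
negative. -/
theorem antisymmetric_fixed_point_stable (s β a b : ℝ) (hβ : 0 < β) (hs : s < -β)
    (hab : a = -b) (ha : a ^ 2 = -s - β) :
    (∀ v : ℝ × ℝ,
        fderiv ℝ (fun p : ℝ × ℝ =>
          (p.2 * (s - p.1 * p.2) - β * p.1, p.1 * (s - p.1 * p.2) - β * p.2)) (a, b) v =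
          (((!![s, -s - 2 * β; -s - 2 * β, s] : Matrix (Fin 2) (Fin 2) ℝ).mulVec
              ![v.1, v.2]) 0,
            ((!![s, -s - 2 * β; -s - 2 * β, s] : Matrix (Fin 2) (Fin 2) ℝ).mulVec
              ![v.1, v.2]) 1)) ∧
      (∃ v : Fin 2 → ℝ, v ≠ 0 ∧
        (!![s, -s - 2 * β; -s - 2 * β, s] : Matrix (Fin 2) (Fin 2) ℝ).mulVec v =
          (-2 * β) • v) ∧
      (∃ v : Fin 2 → ℝ, v ≠ 0 ∧
        (!![s, -s - 2 * β; -s - 2 * β, s] : Matrix (Fin 2) (Fin 2) ℝ).mulVec v =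
          (2 * (s + β)) • v) ∧
      -2 * β < 0 ∧ 2 * (s + β) < 0 := by
  have hfst : HasFDerivAt (fun p : ℝ × ℝ => p.1) (ContinuousLinearMap.fst ℝ ℝ ℝ) (a, b) :=
    hasFDerivAt_fst
  have hsnd : HasFDerivAt (fun p : ℝ × ℝ => p.2) (ContinuousLinearMap.snd ℝ ℝ ℝ) (a, b) :=
    hasFDerivAt_snd
  have hq := (hasFDerivAt_const s ((a, b) : ℝ × ℝ)).sub (hfst.mul hsnd)
  have h1 := (hsnd.mul hq).sub ((hasFDerivAt_const β ((a, b) : ℝ × ℝ)).mul hfst)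
  have h2 := (hfst.mul hq).sub ((hasFDerivAt_const β ((a, b) : ℝ × ℝ)).mul hsnd)
  have H := (HasFDerivAt.prodMk h1 h2)
  refine ⟨fun v => ?_, ⟨![1, 1], ?_, ?_⟩, ⟨![1, -1], ?_, ?_⟩, by linarith, by linarith⟩
  · rw [HasFDerivAt.fderiv (f := fun p : ℝ × ℝ =>
        (p.2 * (s - p.1 * p.2) - β * p.1, p.1 * (s - p.1 * p.2) - β * p.2)) H]
    have hb2 : b ^ 2 = -s - β := by rw [← ha, hab]; ring
    have hab2 : a * b = s + β := by
      have : a * b = -(a ^ 2) := by rw [hab]; ring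
      rw [this, ha]; ring
    simp [Matrix.mulVec, dotProduct, Fin.sum_univ_two, ContinuousLinearMap.prod_apply,
      ContinuousLinearMap.smul_apply]
    constructor
    · linear_combination (-v.1) * hb2 - 2 * v.2 * hab2
    · linear_combination (-2 * v.1) * hab2 - v.2 * ha
  · intro h
    have := congrFun h 0
    simp at this
  · funext i
    fin_cases i <;> simp [Matrix.mulVec, dotProduct, Fin.sum_univ_two] <;> ring
  · intro h
    have := congrFun h 0
    simp at this
  · funext i
    fin_cases i <;> simp [Matrix.mulVec, dotProduct, Fin.sum_univ_two] <;> ring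
end

section
/- Let s, β ∈ ℝ with β > 0 and |s| > β. Then the only solutions (a,b) ∈ ℝ² of the fixed-point system b(s−ab) = βa, a(s−ab) = βb, other than (0,0), are the two points (a,b) = ±(√(|s|−β), sgn(s)·√(|s|−β)); in particular there are exactly three fixed points in this parameter regime, and if instead |s| ≤ β the only fixed point is (0,0). -/
/-- For `β > 0`: if `|s| > β`, the nonzero solutions of the fixed-point system
`b(s−ab) = βa`, `a(s−ab) = βb` are exactly `±(√(|s|−β), sgn(s)·√(|s|−β))`
(so there are exactly three fixed points); if `|s| ≤ β`, the origin is the only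
fixed point. -/
theorem fixed_points_count (s β : ℝ) (hβ : 0 < β) :
    (|s| > β →
      ∀ a b : ℝ,
        (b * (s - a * b) = β * a ∧ a * (s - a * b) = β * b ∧ (a, b) ≠ (0, 0)) ↔
          ((a, b) = (Real.sqrt (|s| - β), Real.sign s * Real.sqrt (|s| - β)) ∨
            (a, b) = (-Real.sqrt (|s| - β), -(Real.sign s * Real.sqrt (|s| - β))))) ∧
    (|s| ≤ β →
      ∀ a b : ℝ, b * (s - a * b) = β * a → a * (s - a * b) = β * b →
        a = 0 ∧ b = 0) := by
  constructor
  · intro hs a b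
    have hsβ : 0 < |s| - β := sub_pos.mpr hs
    set t := Real.sqrt (|s| - β) with ht
    have ht2 : t ^ 2 = |s| - β := Real.sq_sqrt hsβ.le
    have htpos : 0 < t := Real.sqrt_pos.mpr hsβ
    constructor
    · rintro ⟨h1, h2, hne⟩
      have hne' : ¬(a = 0 ∧ b = 0) := by
        intro h; exact hne (by simp [Prod.ext_iff, h.1, h.2])
      have hab : (a - b) * (a + b) = 0 := by
        have h3 : β * a ^ 2 = β * b ^ 2 := by linear_combination b * h2 - a * h1
        have h4 : a ^ 2 = b ^ 2 := mul_left_cancel₀ (ne_of_gt hβ) h3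
        linear_combination h4
      rcases mul_eq_zero.mp hab with h | h
      · -- a = b
        have hb : b = a := by linarith
        subst hb
        have ha0 : b ≠ 0 := by rintro rfl; exact hne' ⟨rfl, rfl⟩
        have hbpos : 0 < b ^ 2 := lt_of_le_of_ne (sq_nonneg b) (Ne.symm (pow_ne_zero 2 ha0))
        have hs2 : b ^ 2 = s - β := by
          have ha2 : b * (s - b * b - β) = 0 := by linear_combination h1
          have h5 := (mul_eq_zero.mp ha2).resolve_left ha0
          linear_combination -h5
        have hspos : 0 < s := by nlinarith [hbpos, hs2]
        have habs : |s| = s := abs_of_pos hspos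
        have hsign : Real.sign s = 1 := Real.sign_of_pos hspos
        have haa : b = t ∨ b = -t := by
          have h4 : b ^ 2 = t ^ 2 := by rw [ht2, habs]; linarith
          have h5 : |b| = t := by
            rw [← Real.sqrt_sq_eq_abs, h4, Real.sqrt_sq htpos.le]
          exact (abs_eq htpos.le).mp h5
        rcases haa with rfl | rfl
        · left; simp [hsign]
        · right; simp [hsign]
      · -- a = -b
        have hb : a = -b := by linarith
        subst hb
        have hb0 : b ≠ 0 := by rintro rfl; exact hne' ⟨by ring, rfl⟩
        have hbpos : 0 < b ^ 2 := lt_of_le_of_ne (sq_nonneg b) (Ne.symm (pow_ne_zero 2 hb0))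
        have hs2 : b ^ 2 = -s - β := by
          have hb2 : b * (s + b * b + β) = 0 := by linear_combination h1
          have h5 := (mul_eq_zero.mp hb2).resolve_left hb0
          linear_combination h5
        have hsneg : s < 0 := by nlinarith [hbpos, hs2]
        have habs : |s| = -s := abs_of_neg hsneg
        have hsign : Real.sign s = -1 := Real.sign_of_neg hsneg
        have hbb : b = t ∨ b = -t := by
          have h4 : b ^ 2 = t ^ 2 := by rw [ht2, habs]; linarith
          have h5 : |b| = t := by
            rw [← Real.sqrt_sq_eq_abs, h4, Real.sqrt_sq htpos.le]
          exact (abs_eq htpos.le).mp h5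
        rcases hbb with rfl | rfl
        · right; simp [hsign]
        · left; simp [hsign]
    · intro h
      have hs0 : s ≠ 0 := by
        intro h0; rw [h0] at hs; simp at hs; linarith
      rcases lt_or_gt_of_ne hs0 with hneg | hpos
      · have habs : |s| = -s := abs_of_neg hneg
        have hsign : Real.sign s = -1 := Real.sign_of_neg hneg
        have htt : t * t = -s - β := by
          have h := ht2; rw [habs] at h; linear_combination h
        rcases h with h | h
        · rw [Prod.ext_iff] at h
          obtain ⟨ha, hb⟩ := h
          simp only [hsign] at ha hb
          refine ⟨?_, ?_, ?_⟩
          · rw [ha, hb]; linear_combination (-t) * htt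
          · rw [ha, hb]; linear_combination t * htt
          · rw [ha, hb]; intro hcon
            rw [Prod.ext_iff] at hcon
            have := hcon.1; simp at this; linarith
        · rw [Prod.ext_iff] at h
          obtain ⟨ha, hb⟩ := h
          simp only [hsign] at ha hb
          refine ⟨?_, ?_, ?_⟩
          · rw [ha, hb]; linear_combination t * htt
          · rw [ha, hb]; linear_combination (-t) * htt
          · rw [ha, hb]; intro hcon
            rw [Prod.ext_iff] at hcon
            have := hcon.1; simp at this; linarith
      · have habs : |s| = s := abs_of_pos hpos
        have hsign : Real.sign s = 1 := Real.sign_of_pos hpos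
        have htt : t * t = s - β := by
          have h := ht2; rw [habs] at h; linear_combination h
        rcases h with h | h
        · rw [Prod.ext_iff] at h
          obtain ⟨ha, hb⟩ := h
          simp only [hsign, one_mul] at ha hb
          refine ⟨?_, ?_, ?_⟩
          · rw [ha, hb]; linear_combination (-t) * htt
          · rw [ha, hb]; linear_combination (-t) * htt
          · rw [ha, hb]; intro hcon
            rw [Prod.ext_iff] at hcon
            have := hcon.1; simp at this; linarith
        · rw [Prod.ext_iff] at h
          obtain ⟨ha, hb⟩ := h
          simp only [hsign, one_mul] at ha hb
          refine ⟨?_, ?_, ?_⟩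
          · rw [ha, hb]; linear_combination t * htt
          · rw [ha, hb]; linear_combination t * htt
          · rw [ha, hb]; intro hcon
            rw [Prod.ext_iff] at hcon
            have := hcon.1; simp at this; linarith
  · intro hs a b h1 h2
    have hab : (a - b) * (a + b) = 0 := by
      have h3 : β * a ^ 2 = β * b ^ 2 := by linear_combination b * h2 - a * h1
      have h4 : a ^ 2 = b ^ 2 := mul_left_cancel₀ (ne_of_gt hβ) h3
      linear_combination h4
    have habs1 : s ≤ β := le_trans (le_abs_self s) hs
    have habs2 : -s ≤ β := by have := abs_le.mp hs; linarith
    rcases mul_eq_zero.mp hab with h | h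
    · have hb : b = a := by linarith
      subst hb
      have ha2 : b * (s - b * b - β) = 0 := by linear_combination h1
      rcases mul_eq_zero.mp ha2 with h0 | h0
      · exact ⟨h0, h0⟩
      · have hb0 : b * b = 0 := by nlinarith [mul_self_nonneg b]
        have := mul_self_eq_zero.mp hb0
        exact ⟨this, this⟩
    · have hb : a = -b := by linarith
      subst hb
      have hb2 : b * (s + b * b + β) = 0 := by linear_combination h1
      rcases mul_eq_zero.mp hb2 with h0 | h0
      · exact ⟨by rw [h0]; ring, h0⟩
      · have hb0 : b * b = 0 := by nlinarith [mul_self_nonneg b]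
        have hb00 := mul_self_eq_zero.mp hb0
        exact ⟨by rw [hb00]; ring, hb00⟩
end
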